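/- For every group G and every subring k of the rational numbers ℚ, the group algebra k[G] (the monoid algebra of G over k) is G-dense with respect to the canonical monoid homomorphism σ : G → k[G] sending g to the corresponding group element of the group algebra. -/

import Mathlib

/-- A unital ring `R` together with a monoid homomorphism `σ` from a group `G` to the
multiplicative monoid of `R` is *`G`-dense* if for every free right `R`-module `F`
(a module over `Rᵐᵒᵖ` that is free) and every additive subgroup `T` of `F` that is
stable under right scalar multiplication by every `σ g` and that generates `F` as a
right `R`-module, there is an `R`-basis of `F` contained in `T`. -/
def IsGDense (G : Type*) [Group G] (R : Type*) [Ring R] (σ : G →* R) : Prop :=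
  ∀ (F : Type) [AddCommGroup F] [Module Rᵐᵒᵖ F] [Module.Free Rᵐᵒᵖ F]
    (T : AddSubgroup F),
    (∀ (g : G) (x : F), x ∈ T → (MulOpposite.op (σ g)) • x ∈ T) →
    Submodule.span Rᵐᵒᵖ (T : Set F) = ⊤ →
    ∃ (ι : Type) (b : Module.Basis ι Rᵐᵒᵖ F), ∀ i, b i ∈ T

/-!
Multiplying `c ∈ k ⊆ ℚ` by its denominator, a unit of `k` by Bézout, gives an integer. Hence every
element of `k[G]` is carried into `ℤ[G]` by an integer that is a unit of `k`. Since `T` is stable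
under the right action of `ℤ[G]`, every element of the span of `T` is in turn moved into `T` by
such an integer, a unit of `k[G]`. Both steps are instances of one fact: if every scalar is carried
into the stabiliser of an additive subgroup by an invertible integer, then every element of its
span is carried into it by one. As `T` spans `F`, rescaling any basis of `F` by these units gives a
basis inside `T`.
-/

open MulOpposite

universe u

theorem Subring.exists_isUnit_intCast_zsmul_eq_intCast (k : Subring ℚ) (c : k) :
    ∃ n m : ℤ, IsUnit (n : k) ∧ n • c = m := by
  have hnum : ((c : ℚ).den : ℚ) * c = (c : ℚ).num := Rat.den_mul_eq_num c
  obtain ⟨a, b, hab⟩ := Rat.isCoprime_num_den c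
  have hbezout : (a : ℚ) * (c : ℚ).num + b * (c : ℚ).den = 1 := by exact_mod_cast hab
  refine ⟨(c : ℚ).den, (c : ℚ).num, IsUnit.of_mul_eq_one (a * c + b) ?_, ?_⟩ <;>
    apply Subtype.ext <;> push_cast
  · linear_combination (a : ℚ) * hnum + hbezout
  · simp [zsmul_eq_mul, hnum]

theorem Submodule.exists_isUnit_zsmul_mem_of_mem_span {A F : Type*} [Ring A] [AddCommGroup F]
    [Module A F] {T : AddSubgroup F}
    (h : ∀ a : A, ∃ n : ℤ, IsUnit (n : A) ∧ ∀ x ∈ T, (n • a) • x ∈ T)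
    {x : F} (hx : x ∈ Submodule.span A (T : Set F)) :
    ∃ n : ℤ, IsUnit (n : A) ∧ n • x ∈ T := by
  induction hx using Submodule.span_induction with
  | mem y hy => exact ⟨1, by simp, by rwa [one_smul]⟩
  | zero => exact ⟨1, by simp, by rw [smul_zero]; exact T.zero_mem⟩
  | add y z _ _ hy hz =>
    obtain ⟨n, hn, hny⟩ := hy
    obtain ⟨m, hm, hmz⟩ := hz
    refine ⟨n * m, by simpa using hn.mul hm, ?_⟩
    rw [smul_add, mul_comm, mul_smul, mul_comm, mul_smul]
    exact add_mem (zsmul_mem hny m) (zsmul_mem hmz n)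
  | smul a y _ hy =>
    obtain ⟨n, hn, hny⟩ := hy
    obtain ⟨m, hm, hma⟩ := h a
    refine ⟨m * n, by simpa using hm.mul hn, ?_⟩
    rw [mul_smul, smul_comm n, ← smul_assoc]
    exact hma _ hny

theorem MonoidAlgebra.exists_isUnit_zsmul_mem_closure_range_of {k G : Type*} [Ring k] [Monoid G]
    (hk : ∀ c : k, ∃ n m : ℤ, IsUnit (n : k) ∧ n • c = m) (r : MonoidAlgebra k G) :
    ∃ n : ℤ, IsUnit (n : k) ∧ n • r ∈ AddSubgroup.closure (Set.range (of k G)) := by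
  have hr : r ∈ Submodule.span k
      (AddSubgroup.closure (Set.range (of k G)) : Set (MonoidAlgebra k G)) := by
    induction r using MonoidAlgebra.induction_on with
    | of g => exact Submodule.subset_span (AddSubgroup.subset_closure ⟨g, rfl⟩)
    | add x y hx hy => exact add_mem hx hy
    | smul c x hx => exact Submodule.smul_mem _ c hx
  refine Submodule.exists_isUnit_zsmul_mem_of_mem_span (fun c => ?_) hr
  obtain ⟨n, m, hn, hnc⟩ := hk c
  exact ⟨n, hn, fun x hx => by rw [hnc, Int.cast_smul_eq_zsmul]; exact zsmul_mem hx m⟩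

theorem AddSubgroup.op_smul_mem_of_mem_closure {R F : Type*} [Ring R] [AddCommGroup F]
    [Module Rᵐᵒᵖ F] {T : AddSubgroup F} {X : Set R} (hX : ∀ r ∈ X, ∀ x ∈ T, op r • x ∈ T)
    {s : R} (hs : s ∈ AddSubgroup.closure X) {x : F} (hx : x ∈ T) : op s • x ∈ T := by
  induction hs using AddSubgroup.closure_induction generalizing x with
  | mem r hr => exact hX r hr x hx
  | zero => rw [op_zero, zero_smul]; exact T.zero_mem
  | add r s _ _ hr hs => rw [op_add, add_smul]; exact add_mem (hr hx) (hs hx)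
  | neg r _ hr => rw [op_neg, neg_smul]; exact neg_mem (hr hx)

theorem Module.Free.exists_basis_forall_mem {A : Type*} {F : Type u} [Ring A] [AddCommGroup F]
    [Module A F] [Module.Free A F] {T : Set F} (h : ∀ x : F, ∃ u : Aˣ, u • x ∈ T) :
    ∃ (ι : Type u) (b : Module.Basis ι A F), ∀ i, b i ∈ T := by
  choose u hu using h
  let b := Module.Free.chooseBasis A F
  exact ⟨_, b.unitsSMul (u ∘ b), fun i => by rw [Module.Basis.unitsSMul_apply]; exact hu (b i)⟩

/-- For every group `G` and every subring `k ⊆ ℚ`, the group algebra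
`k[G]` is `G`-dense with respect to the canonical map `g ↦ g`. -/
theorem monoidAlgebra_subringRat_isGDense (G : Type*) [Group G] (k : Subring ℚ) :
    IsGDense G (MonoidAlgebra k G) (MonoidAlgebra.of k G) := by
  intro F _ _ _ T hT hspan
  have hstable (a : (MonoidAlgebra k G)ᵐᵒᵖ) :
      ∃ n : ℤ, IsUnit (n : (MonoidAlgebra k G)ᵐᵒᵖ) ∧ ∀ x ∈ T, (n • a) • x ∈ T := by
    obtain ⟨n, hn, hna⟩ := MonoidAlgebra.exists_isUnit_zsmul_mem_closure_range_of
      (Subring.exists_isUnit_intCast_zsmul_eq_intCast k) a.unop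
    refine ⟨n, by simpa using (hn.map (algebraMap k (MonoidAlgebra k G))).op, fun x hx => ?_⟩
    exact AddSubgroup.op_smul_mem_of_mem_closure (by rintro _ ⟨g, rfl⟩; exact hT g) hna hx
  refine Module.Free.exists_basis_forall_mem fun x => ?_
  obtain ⟨n, hn, hnx⟩ :=
    Submodule.exists_isUnit_zsmul_mem_of_mem_span hstable (hspan ▸ Submodule.mem_top)
  exact ⟨hn.unit, by rwa [Units.smul_def, IsUnit.unit_spec, Int.cast_smul_eq_zsmul]⟩
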